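/- If R and R' are canonically ordered trees that are r-isomorphic (isomorphic as rooted trees), then ws(R) = ws(R') and R and R' are o-isomorphic (isomorphic as ordered trees). -/

import Mathlib

inductive OTree : Type
  | node : List OTree → OTree

namespace OTree

def size : OTree → ℕ
  | .node cs => (cs.attach.map (fun c => size c.1)).sum + 1
decreasing_by simp only [OTree.node.sizeOf_spec]; have := List.sizeOf_lt_of_mem c.2; omega

def ws : OTree → List ℕ
  | .node cs => size (.node cs) :: (cs.attach.map (fun c => ws c.1)).flatten
decreasing_by simp only [OTree.node.sizeOf_spec]; have := List.sizeOf_lt_of_mem c.2; omega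

def preorder : OTree → List OTree
  | .node cs => .node cs :: (cs.attach.map (fun c => preorder c.1)).flatten
decreasing_by simp only [OTree.node.sizeOf_spec]; have := List.sizeOf_lt_of_mem c.2; omega

lemma size_pos (R : OTree) : 0 < R.size := by
  cases R with | node cs => simp only [OTree.size]; omega

end OTree

inductive RIso : OTree → OTree → Prop
  | node {cs cs' : List OTree} (l : List OTree) (hp : l.Perm cs')
      (hlen : cs.length = l.length)
      (h : ∀ (i : ℕ) (h1 : i < cs.length) (h2 : i < l.length), RIso cs[i] l[i]) :
      RIso (.node cs) (.node cs')

inductive Canonical : OTree → Prop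
  | node {cs : List OTree}
      (hchain : List.Chain' (fun u v => OTree.ws v ≤ OTree.ws u) cs)
      (h : ∀ c ∈ cs, Canonical c) : Canonical (.node cs)

def Centroidal {V : Type} [Fintype V] (G : SimpleGraph V) (u : V) : Prop :=
  ∀ v : ↥{x : V | x ≠ u},
    2 * Nat.card {w : ↥{x : V | x ≠ u} | (G.induce {x : V | x ≠ u}).Reachable v w}
      ≤ Fintype.card V

def IsParent (w : List ℕ) (i j : ℕ) : Prop :=
  i < j ∧ j < i + w.getD i 0 ∧ ∀ k, i < k → k < j → ¬ (j < k + w.getD k 0)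

def graphOf (R : OTree) : SimpleGraph (Fin R.size) :=
  SimpleGraph.fromRel (fun i j => IsParent R.ws i.1 j.1)

def rootIdx (R : OTree) : Fin R.size := ⟨0, R.size_pos⟩

def B (n : ℕ) : Set (List ℕ) := {s | ∃ R : OTree, Canonical R ∧ R.size = n ∧ R.ws = s}

def Succeq (s t : List ℕ) : Prop := t ≤ s ∨ s <+: t

def A (q n : ℕ) : Set (List ℕ × List ℕ) :=
  {p | p.1 ∈ B q ∧ p.2 ∈ B (n - q) ∧ Succeq p.1 p.2.tail}

def FwsUni {V : Type} [Fintype V] (G : SimpleGraph V) (s : List ℕ) : Prop :=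
  ∃ R : OTree, Canonical R ∧ R.ws = s ∧
    ∃ f : graphOf R ≃g G, Centroidal G (f (rootIdx R))

def FwsBi {V : Type} [Fintype V] (G : SimpleGraph V) (s : List ℕ) : Prop :=
  ∃ u v, u ≠ v ∧ G.Adj u v ∧ Centroidal G u ∧ Centroidal G v ∧
  ∃ A B : OTree, Canonical A ∧ Canonical B ∧ B.ws ≤ A.ws ∧ s = A.ws ++ B.ws ∧
  ∃ (fA : graphOf A ≃g (G.deleteEdges {s(u,v)}).induce
        {x | (G.deleteEdges {s(u,v)}).Reachable u x})
    (fB : graphOf B ≃g (G.deleteEdges {s(u,v)}).induce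
        {x | (G.deleteEdges {s(u,v)}).Reachable v x}),
    (fA (rootIdx A)).1 = u ∧ (fB (rootIdx B)).1 = v


/-!
By induction on the r-isomorphism, matched children are equal trees, so the children lists of the
two roots are permutations of each other. Both are sorted by weakly decreasing weight sequence, and
a tree is determined by its weight sequence, so the preorder on trees pulled back from weight
sequences is antisymmetric and the two sorted lists coincide.
-/

namespace OTree

theorem ws_node (cs : List OTree) :
    ws (.node cs) = size (.node cs) :: (cs.map ws).flatten := by
  rw [ws, List.attach_map_val]

theorem size_node (cs : List OTree) : size (.node cs) = (cs.map size).sum + 1 := by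
  rw [size, List.attach_map_val]

theorem ws_ne_nil (R : OTree) : R.ws ≠ [] := by
  cases R with | node cs => simp [ws_node]

theorem head?_ws (R : OTree) : R.ws.head? = some R.size := by
  cases R with | node cs => simp [ws_node]

theorem length_ws : ∀ R : OTree, R.ws.length = R.size
  | .node cs => by
    have h : ∀ c ∈ cs, c.ws.length = c.size := fun c _ => length_ws c
    simp only [ws_node, size_node, List.length_cons, List.length_flatten, List.map_map,
      Function.comp_def, List.map_congr_left h]

-- A weight sequence starts with its own length, so it is never a proper prefix of another one.
theorem ws_append_inj {a b : OTree} {l l' : List ℕ} (h : a.ws ++ l = b.ws ++ l') :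
    a.ws = b.ws ∧ l = l' := by
  have hsize : a.size = b.size := by
    simpa [List.head?_append_of_ne_nil _ (ws_ne_nil _), head?_ws] using congrArg List.head? h
  exact List.append_inj h (by rw [length_ws, length_ws, hsize])

theorem eq_of_flatten_map_ws_eq {cs cs' : List OTree} (hinj : ∀ a ∈ cs, ∀ b, a.ws = b.ws → a = b)
    (h : (cs.map ws).flatten = (cs'.map ws).flatten) : cs = cs' := by
  induction cs generalizing cs' with
  | nil =>
    cases cs' with
    | nil => rfl
    | cons b _ => simp [ws_ne_nil] at h
  | cons a cs ih =>
    cases cs' with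
    | nil => simp [ws_ne_nil] at h
    | cons b cs' =>
      obtain ⟨hab, hrest⟩ := ws_append_inj (by simpa using h)
      rw [hinj a List.mem_cons_self b hab,
        ih (fun x hx => hinj x (List.mem_cons_of_mem a hx)) hrest]

theorem ws_injective : Function.Injective ws
  | .node cs, .node cs', h => by
    rw [ws_node, ws_node] at h
    rw [eq_of_flatten_map_ws_eq (fun a _ b hab => ws_injective hab) (List.cons.inj h).2]

theorem eq_of_perm_of_isChain_ws_ge {cs cs' : List OTree} (hp : cs.Perm cs')
    (hs : cs.IsChain (fun u v => v.ws ≤ u.ws)) (hs' : cs'.IsChain (fun u v => v.ws ≤ u.ws)) :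
    cs = cs' := by
  have : IsTrans OTree (fun u v => v.ws ≤ u.ws) := ⟨fun _ _ _ h₁ h₂ => h₂.trans h₁⟩
  exact hp.eq_of_pairwise
    (fun _ _ _ _ hba hab => ws_injective (le_antisymm hab hba))
    (List.isChain_iff_pairwise.mp hs) (List.isChain_iff_pairwise.mp hs')

end OTree

theorem RIso.eq_of_canonical {R R' : OTree} (h : RIso R R') (hR : Canonical R)
    (hR' : Canonical R') : R = R' := by
  induction h with
  | @node cs cs' l hp hlen _ ih =>
    obtain ⟨hchain, hcanon⟩ := hR
    obtain ⟨hchain', hcanon'⟩ := hR'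
    have hcs : cs = l := List.ext_getElem hlen fun i h₁ h₂ =>
      ih i h₁ h₂ (hcanon _ (List.getElem_mem h₁))
        (hcanon' _ (hp.mem_iff.mp (List.getElem_mem h₂)))
    rw [OTree.eq_of_perm_of_isChain_ws_ge (hcs ▸ hp) hchain hchain']

theorem stmt4 (R R' : OTree) (hR : Canonical R) (hR' : Canonical R')
    (h : RIso R R') : R.ws = R'.ws ∧ R = R' := by
  have hRR' : R = R' := h.eq_of_canonical hR hR'
  exact ⟨congrArg OTree.ws hRR', hRR'⟩
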